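/- Soundness of Proof Rule #2 for quantitative reactivity: let S be a countable set with the discrete σ-algebra, P a Markov kernel on S, μ an initial probability measure on S, and (A₁,B₁),…,(A_k,B_k) subsets of S. Suppose there exist: a region I ⊆ S with a function V₀ : S → [0,∞); regions J₁,…,J_k with J_i ⊆ I \ A_i; functions V₁,W₁,…,V_k,W_k : S → [0,∞); decrease functions d₁,…,d_k : [0,∞) → (0,∞); and probability functions p₁,…,p_k : [0,∞) → (0,1], such that for every i = 1,…,k: (a) PV_i(s) ≤ V_i(s) for all s ∉ A_i; (b) V_i(s) ≥ 1 for all s ∈ A_i; (c) there exists γ_i > 0 with V_i(s) ≤ 1 − γ_i for all s ∈ J_i; (d) W_i(s) > 0 for all s ∈ I \ (B_i ∪ J_i); (e) W_i(s) = 0 for all s ∈ I ∩ (B_i ∪ J_i); (f) PW_i(s) ≤ W_i(s) for all s ∈ I \ (B_i ∪ J_i); (g) for every r > 0 and every s ∈ I \ (B_i ∪ J_i) with W_i(s) = r, P(s, {s' : W_i(s') ≤ r − d_i(r)}) ≥ p_i(r); (h) p_i is antitone on (0,∞) (r₁ ≤ r₂ implies p_i(r₁) ≥ p_i(r₂)) and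 d_i is antitone on (0,∞); and moreover (i) PV₀(s) ≤ V₀(s) for all s ∈ I and (j) V₀(s) ≥ 1 for all s ∉ I. Then P_μ(⋂_{i=1}^k (Fin(A_i) ∪ Inf(B_i))) ≥ 1 − μV₀. -/

import Mathlib

open MeasureTheory ProbabilityTheory Filter Set ENNReal

/-- The one-step shift on trajectories: `shift ω n = ω (n+1)`. -/
def shift {S : Type*} (ω : ℕ → S) : ℕ → S := fun n => ω (n + 1)

/-- `Fin A`: the event of visiting `A` only finitely many times. -/
def finVisits {S : Type*} (A : Set S) : Set (ℕ → S) :=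
  {ω | ∃ n, ∀ m, n ≤ m → ω m ∉ A}

/-- `Inf B`: the event of visiting `B` infinitely many times. -/
def infVisits {S : Type*} (B : Set S) : Set (ℕ → S) :=
  {ω | ∀ n, ∃ m, n ≤ m ∧ ω m ∈ B}

/-- `{σ_A < ∞}`: the event that the first return time to `A` is finite,
where `σ_A = 1 + τ_A ∘ shift`; equivalently `∃ n, ω (n+1) ∈ A`. -/
def retEvent {S : Type*} (A : Set S) : Set (ℕ → S) := {ω | ∃ n, ω (n + 1) ∈ A}

/-- `I^ω`: the event of remaining in `I` forever. -/
def invEvent {S : Type*} (I : Set S) : Set (ℕ → S) := {ω | ∀ n, ω n ∈ I}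

/-- Prepend a state to a trajectory. -/
def consTraj {S : Type*} (s : S) (ω : ℕ → S) : ℕ → S
  | 0 => s
  | n + 1 => ω n

/-- `T` is the Ionescu–Tulcea trajectory kernel of the time-homogeneous Markov chain with
transition kernel `P`: `T s` is the law on `S^ℕ` (with the product σ-algebra) of the
coordinate Markov chain with kernel `P` started at `s`.  It is uniquely characterised
(by the Ionescu–Tulcea theorem) by the one-step Markov recursion below: the trajectory
from `s` is `s` followed by a trajectory started from a `P s`-distributed state.
The trajectory measure `P_ξ` with initial distribution `ξ` is then `ξ.bind (fun s => T s)`,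
and `P_{δ_s} = T s`. -/
def IsTrajKernel {S : Type*} [MeasurableSpace S] (P : Kernel S S)
    (T : Kernel S (ℕ → S)) : Prop :=
  ∀ s : S, (T s : Measure (ℕ → S)) =
    ((P s : Measure S).bind (fun u => (T u : Measure (ℕ → S)))).map (consTraj s)

set_option linter.unusedSectionVars false
open scoped Classical

namespace PRTwo
variable {S : Type*} [MeasurableSpace S] [DiscreteMeasurableSpace S] [Countable S]

@[simp] lemma shift_consTraj (s : S) (ω : ℕ → S) : shift (consTraj s ω) = ω := rfl
@[simp] lemma consTraj_zero (s : S) (ω : ℕ → S) : consTraj s ω 0 = s := rfl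
@[simp] lemma consTraj_succ (s : S) (ω : ℕ → S) (n : ℕ) : consTraj s ω (n+1) = ω n := rfl

lemma shift_iter_apply (N m : ℕ) (ω : ℕ → S) : shift^[N] ω m = ω (m + N) := by
  induction N generalizing ω m with
  | zero => rfl
  | succ n ih =>
    rw [Function.iterate_succ_apply, ih]
    simp [shift, Nat.add_assoc]

lemma shift_iter_consTraj (s : S) (ω : ℕ → S) (m : ℕ) :
    shift^[m+1] (consTraj s ω) = shift^[m] ω := by
  rw [Function.iterate_succ_apply, shift_consTraj]

lemma measurable_shift : Measurable (shift : (ℕ → S) → (ℕ → S)) :=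
  measurable_pi_lambda _ fun n => measurable_pi_apply (n+1)

lemma measurable_consTraj (s : S) : Measurable (consTraj s : (ℕ → S) → (ℕ → S)) := by
  apply measurable_pi_lambda
  intro n
  cases n with
  | zero => exact measurable_const
  | succ m => exact measurable_pi_apply m

lemma measurable_coordSet (n : ℕ) (X : Set S) : MeasurableSet {ω : ℕ → S | ω n ∈ X} :=
  measurable_pi_apply n (MeasurableSet.of_discrete (s := X))

lemma measurable_invEvent (C : Set S) : MeasurableSet (invEvent C : Set (ℕ → S)) := by
  have : invEvent C = ⋂ n, {ω : ℕ → S | ω n ∈ C} := by ext ω; simp [invEvent]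
  rw [this]; exact MeasurableSet.iInter fun n => measurable_coordSet n C

lemma invEvent_shift_iter {C : Set S} {ω : ℕ → S} (h : ω ∈ invEvent C) (m : ℕ) :
    shift^[m] ω ∈ invEvent C := by
  intro n; rw [shift_iter_apply]; exact h _

/-! ### Reach events and first-hit decomposition -/

def reachSet (X : Set S) (Y : Set (ℕ → S)) : Set (ℕ → S) :=
  {ω | ∃ m, ω m ∈ X ∧ shift^[m] ω ∈ Y}

def hitC (X : Set S) (m : ℕ) : Set (ℕ → S) := {ω | (∀ j < m, ω j ∉ X) ∧ ω m ∈ X}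

def hitF (X : Set S) (Y : Set (ℕ → S)) (m : ℕ) : Set (ℕ → S) :=
  hitC X m ∩ shift^[m] ⁻¹' Y

lemma measurable_hitC (X : Set S) (m : ℕ) : MeasurableSet (hitC X m : Set (ℕ → S)) := by
  have : hitC X m = (⋂ j ∈ Finset.range m, {ω : ℕ → S | ω j ∈ X}ᶜ) ∩ {ω : ℕ → S | ω m ∈ X} := by
    ext ω; simp [hitC]
  rw [this]
  exact (MeasurableSet.biInter (Finset.range m).countable_toSet
    (fun j _ => (measurable_coordSet j X).compl)).inter (measurable_coordSet m X)

lemma measurable_hitF (X : Set S) {Y : Set (ℕ → S)} (hY : MeasurableSet Y) (m : ℕ) :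
    MeasurableSet (hitF X Y m : Set (ℕ → S)) :=
  (measurable_hitC X m).inter ((measurable_shift.iterate m) hY)

lemma measurable_reachSet (X : Set S) {Y : Set (ℕ → S)} (hY : MeasurableSet Y) :
    MeasurableSet (reachSet X Y : Set (ℕ → S)) := by
  have : reachSet X Y = ⋃ m, ({ω : ℕ → S | ω m ∈ X} ∩ shift^[m] ⁻¹' Y) := by
    ext ω; simp [reachSet]
  rw [this]
  exact MeasurableSet.iUnion fun m =>
    (measurable_coordSet m X).inter ((measurable_shift.iterate m) hY)

lemma reach_subset_iUnion_hitF {C X : Set S} {Y : Set (ℕ → S)}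
    (hP : ∀ ω ∈ invEvent C, ω 0 ∈ X → (∃ m, ω m ∈ X ∧ shift^[m] ω ∈ Y) → ω ∈ Y) :
    invEvent C ∩ reachSet X Y ⊆ ⋃ m, hitF X (invEvent C ∩ Y) m := by
  rintro ω ⟨hinv, m₀, hm₀X, hm₀Y⟩
  classical
  have hex : ∃ m, ω m ∈ X := ⟨m₀, hm₀X⟩
  set m₁ := Nat.find hex with hm₁
  have hm₁X : ω m₁ ∈ X := Nat.find_spec hex
  have hmin : ∀ j < m₁, ω j ∉ X := fun j hj => Nat.find_min hex hj
  have hle : m₁ ≤ m₀ := Nat.find_min' hex hm₀X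
  have htailinv : shift^[m₁] ω ∈ invEvent C := invEvent_shift_iter hinv m₁
  have htailY : shift^[m₁] ω ∈ Y := by
    apply hP _ htailinv
    · rw [shift_iter_apply]; simpa using hm₁X
    · refine ⟨m₀ - m₁, ?_, ?_⟩
      · rw [shift_iter_apply]; rwa [Nat.sub_add_cancel hle]
      · rw [← Function.iterate_add_apply, Nat.sub_add_cancel hle]; exact hm₀Y
  exact mem_iUnion.mpr ⟨m₁, ⟨hmin, hm₁X⟩, htailinv, htailY⟩

lemma hitC_disjoint (X : Set S) : Pairwise (Function.onFun Disjoint (hitC X (S := S))) := by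
  have key : ∀ a b : ℕ, a < b → ∀ ω : ℕ → S, ω ∈ hitC X a → ω ∉ hitC X b := by
    intro a b hab ω hωa hωb
    exact hωb.1 a hab hωa.2
  intro a b hab
  rcases lt_or_gt_of_ne hab with h | h
  · exact Set.disjoint_left.mpr fun ω hωa hωb => key a b h ω hωa hωb
  · exact Set.disjoint_right.mpr fun ω hωb hωa => key b a h ω hωb hωa

/-! ### Kernel recursion facts -/

variable (P : Kernel S S) [IsMarkovKernel P] (T : Kernel S (ℕ → S)) [IsMarkovKernel T]

lemma T_apply (hT : IsTrajKernel P T) {Y : Set (ℕ → S)} (hY : MeasurableSet Y) (s : S) :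
    T s Y = ∫⁻ u, T u (consTraj s ⁻¹' Y) ∂(P s) := by
  rw [hT s, Measure.map_apply (measurable_consTraj s) hY,
    Measure.bind_apply ((measurable_consTraj s) hY) T.measurable.aemeasurable]

lemma map_shift (hT : IsTrajKernel P T) (s : S) :
    (T s : Measure (ℕ → S)).map shift
      = (P s : Measure S).bind (fun u => (T u : Measure (ℕ → S))) := by
  conv_lhs => rw [hT s]
  rw [Measure.map_map measurable_shift (measurable_consTraj s)]
  have : shift ∘ consTraj s = id := by funext ω; simp
  rw [this, Measure.map_id]

lemma T_shift_zero (hT : IsTrajKernel P T) {Y : Set (ℕ → S)} (hY : MeasurableSet Y)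
    (h0 : ∀ u, T u Y = 0) (s : S) : T s (shift ⁻¹' Y) = 0 := by
  have : T s (shift ⁻¹' Y) = ((T s : Measure (ℕ → S)).map shift) Y := by
    rw [Measure.map_apply measurable_shift hY]
  rw [this, map_shift P T hT, Measure.bind_apply hY T.measurable.aemeasurable]
  simp [h0]

lemma T_shift_iter_zero (hT : IsTrajKernel P T) {Y : Set (ℕ → S)} (hY : MeasurableSet Y)
    (h0 : ∀ u, T u Y = 0) : ∀ N s, T s (shift^[N] ⁻¹' Y) = 0 := by
  intro N
  induction N with
  | zero => simpa using h0
  | succ n ih =>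
    intro s
    have hpre : (shift^[n+1] : (ℕ → S) → (ℕ → S)) ⁻¹' Y = shift ⁻¹' ((shift^[n]) ⁻¹' Y) := by
      rw [Function.iterate_succ]; rfl
    rw [hpre]
    exact T_shift_zero P T hT (measurable_shift.iterate n hY) ih s

lemma T_coord0 (hT : IsTrajKernel P T) (X : Set S) {s : S} (hs : s ∉ X) {Z : Set (ℕ → S)}
    (hZ : MeasurableSet Z) (hsub : Z ⊆ {ω | ω 0 ∈ X}) : T s Z = 0 := by
  rw [T_apply P T hT hZ s]
  have : consTraj s ⁻¹' Z = ∅ := by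
    ext ω; simp only [mem_preimage, mem_empty_iff_false, iff_false]
    intro h; exact hs (hsub h)
  simp [this]


lemma preim_hitC_succ (X : Set S) (m : ℕ) (s : S) :
    consTraj s ⁻¹' hitC X (m+1) = if s ∈ X then (∅ : Set (ℕ → S)) else hitC X m := by
  ext ω
  by_cases hs : s ∈ X <;> simp only [hs, if_true, if_false, mem_preimage, mem_empty_iff_false,
    iff_false, hitC, mem_setOf_eq]
  · rintro ⟨hall, -⟩
    exact hall 0 (Nat.succ_pos m) hs
  · constructor
    · rintro ⟨hall, hm⟩
      exact ⟨fun j hj => hall (j+1) (Nat.succ_lt_succ hj), hm⟩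
    · rintro ⟨hall, hm⟩
      refine ⟨fun j hj => ?_, hm⟩
      cases j with
      | zero => simpa using hs
      | succ j' => exact hall j' (Nat.lt_of_succ_lt_succ hj)

lemma preim_hitF_succ (X : Set S) (Y : Set (ℕ → S)) (m : ℕ) (s : S) :
    consTraj s ⁻¹' hitF X Y (m+1) = if s ∈ X then (∅ : Set (ℕ → S)) else hitF X Y m := by
  have h1 : consTraj s ⁻¹' hitF X Y (m+1)
      = (consTraj s ⁻¹' hitC X (m+1)) ∩ (consTraj s ⁻¹' (shift^[m+1] ⁻¹' Y)) := rfl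
  have h2 : consTraj s ⁻¹' (shift^[m+1] ⁻¹' Y) = shift^[m] ⁻¹' Y := by
    ext ω; simp only [mem_preimage]
    rw [shift_iter_consTraj]
  rw [h1, h2, preim_hitC_succ]
  by_cases hs : s ∈ X <;> simp [hs, hitF]

lemma T_hitC_zero (hT : IsTrajKernel P T) (X : Set S) {s : S} (hs : s ∈ X) :
    T s (hitC X 0) = 1 := by
  rw [T_apply P T hT (measurable_hitC X 0) s]
  have : consTraj s ⁻¹' hitC X 0 = univ := by
    ext ω; simp [hitC, hs]
  rw [this]
  simp

lemma hitF_le (hT : IsTrajKernel P T) {X : Set S} {Y : Set (ℕ → S)} (hY : MeasurableSet Y)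
    {c : ℝ≥0∞} (hbd : ∀ u ∈ X, T u Y ≤ c) :
    ∀ m s, T s (hitF X Y m) ≤ c * T s (hitC X m) := by
  intro m
  induction m with
  | zero =>
    intro s
    by_cases hs : s ∈ X
    · have h1 : T s (hitF X Y 0) ≤ T s Y := by
        apply measure_mono
        intro ω hω
        exact hω.2
      rw [T_hitC_zero P T hT X hs, mul_one]
      exact h1.trans (hbd s hs)
    · have h0 : T s (hitF X Y 0) = 0 := by
        apply T_coord0 P T hT X hs (measurable_hitF X hY 0)
        intro ω hω
        exact hω.1.2
      rw [h0]
      exact zero_le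
  | succ m ih =>
    intro s
    rw [T_apply P T hT (measurable_hitF X hY (m+1)) s,
      T_apply P T hT (measurable_hitC X (m+1)) s]
    by_cases hs : s ∈ X
    · rw [preim_hitF_succ]
      simp only [hs, if_true, measure_empty, lintegral_zero]
      exact zero_le
    · simp only [preim_hitF_succ, preim_hitC_succ, hs, if_false]
      calc ∫⁻ u, T u (hitF X Y m) ∂(P s)
          ≤ ∫⁻ u, c * T u (hitC X m) ∂(P s) := lintegral_mono fun u => ih u
        _ = c * ∫⁻ u, T u (hitC X m) ∂(P s) := lintegral_const_mul c
            (T.measurable_coe (measurable_hitC X m))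

/-- The key Markov-property lemma: if from every state in `X` the probability of
`invEvent C ∩ Y` is at most `c`, and `Y` is "first-visit monotone", then the probability
of staying in `C` and reaching `X` with tail in `Y` is at most `c`. -/
lemma reach_bound (hT : IsTrajKernel P T) {C X : Set S} {Y : Set (ℕ → S)}
    (hY : MeasurableSet Y) {c : ℝ≥0∞}
    (hbd : ∀ u ∈ X, T u (invEvent C ∩ Y) ≤ c)
    (hP : ∀ ω ∈ invEvent C, ω 0 ∈ X → (∃ m, ω m ∈ X ∧ shift^[m] ω ∈ Y) → ω ∈ Y)
    (s : S) : T s (invEvent C ∩ reachSet X Y) ≤ c := by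
  have hmeas : MeasurableSet (invEvent C ∩ Y) := (measurable_invEvent C).inter hY
  calc T s (invEvent C ∩ reachSet X Y)
      ≤ T s (⋃ m, hitF X (invEvent C ∩ Y) m) := measure_mono (reach_subset_iUnion_hitF hP)
    _ ≤ ∑' m, T s (hitF X (invEvent C ∩ Y) m) := measure_iUnion_le _
    _ ≤ ∑' m, c * T s (hitC X m) :=
        ENNReal.tsum_le_tsum fun m => hitF_le P T hT hmeas hbd m s
    _ = c * ∑' m, T s (hitC X m) := ENNReal.tsum_mul_left
    _ = c * T s (⋃ m, hitC X m) := by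
        rw [measure_iUnion (hitC_disjoint X) (measurable_hitC X)]
    _ ≤ c * 1 := mul_le_mul_right (measure_mono (subset_univ _) |>.trans_eq measure_univ) c
    _ = c := mul_one c


lemma preim_invEvent (C : Set S) (s : S) :
    consTraj s ⁻¹' invEvent C = if s ∈ C then invEvent C else (∅ : Set (ℕ → S)) := by
  ext ω
  by_cases hs : s ∈ C <;>
    simp only [hs, if_true, if_false, mem_preimage, mem_empty_iff_false, iff_false, invEvent,
      mem_setOf_eq]
  · constructor
    · intro h n; exact h (n+1)
    · intro h n; cases n with
      | zero => simpa using hs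
      | succ n' => exact h n'
  · intro h; exact hs (h 0)

lemma T_invEvent_rec (hT : IsTrajKernel P T) {C : Set S} {s : S} (hs : s ∈ C) :
    T s (invEvent C) = ∫⁻ u, T u (invEvent C) ∂(P s) := by
  rw [T_apply P T hT (measurable_invEvent C) s]
  congr 1
  rw [preim_invEvent, if_pos hs]

lemma T_invEvent_zero (hT : IsTrajKernel P T) {C : Set S} {s : S} (hs : s ∉ C) :
    T s (invEvent C) = 0 :=
  T_coord0 P T hT C hs (measurable_invEvent C) (fun ω hω => hω 0)

lemma enn_arith {m a q π : ℝ≥0∞} (hm : m ≤ 1) (ha : a ≤ 1) (hq : q ≤ 1) (hπa : π ≤ a) :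
    (m - q*m)*a + m*(1-a) + π*q*m ≤ m := by
  have hane : a ≠ ⊤ := (ha.trans_lt one_lt_top).ne
  have h2 : π*q*m ≤ m*a := by
    calc π*q*m ≤ a*1*m := by
          exact mul_le_mul' (mul_le_mul' hπa hq) le_rfl
      _ = m*a := by ring
  have haq : π*q*m ≤ q*m*a := by
    calc π*q*m = π*(q*m) := by ring
      _ ≤ a*(q*m) := mul_le_mul_left hπa _
      _ = q*m*a := by ring
  calc (m - q*m)*a + m*(1-a) + π*q*m
      = (m*a - q*m*a) + m*(1-a) + π*q*m := by
        rw [ENNReal.sub_mul (fun _ _ => hane)]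
    _ ≤ (m*a - π*q*m) + m*(1-a) + π*q*m := by
        exact add_le_add_left (add_le_add_left (tsub_le_tsub_left haq (m*a)) _) _
    _ = (m*a - π*q*m) + π*q*m + m*(1-a) := by ring
    _ = m*a + m*(1-a) := by rw [tsub_add_cancel_of_le h2]
    _ = m*(a + (1-a)) := by ring
    _ = m := by
        have : a + (1 - a) = 1 := by
          rw [add_comm]; exact tsub_add_cancel_of_le ha
        rw [this, mul_one]

/-- Contraction-to-zero: a region `DL` on which `W` is positive and bounded by `K·dL`,
with uniform one-step drift `dL` with probability at least `pL`, cannot be invariant. -/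
lemma eta_zero (hT : IsTrajKernel P T) {DL : Set S} (Wf : S → ℝ) (dL pL : ℝ) (K : ℕ)
    (hpL0 : 0 < pL) (hpL1 : pL ≤ 1)
    (hWpos : ∀ u ∈ DL, 0 < Wf u)
    (hWle : ∀ u ∈ DL, Wf u ≤ (K : ℝ) * dL)
    (hdrift : ∀ u ∈ DL, ENNReal.ofReal pL ≤ P u {u' | Wf u' ≤ Wf u - dL}) :
    ∀ u, T u (invEvent DL) = 0 := by
  set η : S → ℝ≥0∞ := fun u => T u (invEvent DL) with hηdef
  set m : ℝ≥0∞ := ⨆ u, η u with hmdef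
  set π : ℝ≥0∞ := ENNReal.ofReal pL with hπdef
  have hπpos : 0 < π := ENNReal.ofReal_pos.mpr hpL0
  have hπ1 : π ≤ 1 := ENNReal.ofReal_le_one.mpr hpL1
  have hη1 : ∀ u, η u ≤ 1 := fun u => prob_le_one
  have hm1 : m ≤ 1 := iSup_le hη1
  have hmne : m ≠ ⊤ := (hm1.trans_lt one_lt_top).ne
  have hηm : ∀ u, η u ≤ m := fun u => le_iSup η u
  have hη0 : ∀ u, u ∉ DL → η u = 0 := fun u hu => T_invEvent_zero P T hT hu
  -- main induction
  have main : ∀ j : ℕ, ∀ u, Wf u ≤ (j : ℝ) * dL → η u + π^j * m ≤ m := by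
    intro j
    induction j with
    | zero =>
      intro u hu
      have hu' : u ∉ DL := fun h => absurd (hWpos u h) (by simpa using hu.not_gt)
      rw [hη0 u hu']
      simp
    | succ j ih =>
      intro u hu
      by_cases huD : u ∈ DL
      · have hWu : 0 < Wf u := hWpos u huD
        set Δ : Set S := {u' | Wf u' ≤ Wf u - dL} with hΔdef
        have hΔmeas : MeasurableSet Δ := MeasurableSet.of_discrete
        have ha1 : P u Δ ≤ 1 := prob_le_one
        have hπa : π ≤ P u Δ := hdrift u huD
        have hΔbd : ∀ u', u' ∈ Δ → η u' ≤ m - π^j * m := by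
          intro u' hu'
          have hWu' : Wf u' ≤ (j : ℝ) * dL := by
            have := hu'.out
            have h2 : Wf u ≤ ((j : ℝ) + 1) * dL := by push_cast at hu ⊢; linarith
            linarith
          have hfin : π^j * m ≠ ⊤ := by
            exact (mul_le_of_le_one_left (zero_le) (pow_le_one' hπ1 j)).trans_lt
              (hm1.trans_lt one_lt_top) |>.ne
          exact ENNReal.le_sub_of_add_le_right hfin (ih u' hWu')
        -- pointwise bound on η
        have hb : ∀ u', η u' ≤ Δ.indicator (fun _ => m - π^j*m) u' + Δᶜ.indicator (fun _ => m) u' := by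
          intro u'
          by_cases h : u' ∈ Δ
          · simp only [indicator_of_mem h, indicator_of_notMem (by simpa using h : u' ∉ Δᶜ)]
            simpa using hΔbd u' h
          · simp only [indicator_of_notMem h, indicator_of_mem (by simpa using h : u' ∈ Δᶜ)]
            simpa using hηm u'
        have hrec : η u = ∫⁻ u', η u' ∂(P u) := T_invEvent_rec P T hT huD
        have hint : η u ≤ (m - π^j*m) * P u Δ + m * P u Δᶜ := by
          rw [hrec]
          calc ∫⁻ u', η u' ∂(P u)
              ≤ ∫⁻ u', (Δ.indicator (fun _ => m - π^j*m) u' + Δᶜ.indicator (fun _ => m) u') ∂(P u) :=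
                lintegral_mono hb
            _ = (m - π^j*m) * P u Δ + m * P u Δᶜ := by
                rw [lintegral_add_left (measurable_const.indicator hΔmeas)]
                rw [lintegral_indicator_const hΔmeas, lintegral_indicator_const hΔmeas.compl]
        have hcompl : P u Δᶜ = 1 - P u Δ := by
          rw [measure_compl hΔmeas (measure_ne_top _ _)]
          congr 1
          exact measure_univ
        calc η u + π^(j+1) * m
            ≤ ((m - π^j*m) * P u Δ + m * (1 - P u Δ)) + π*π^j*m := by
              rw [← hcompl, pow_succ, mul_comm (π^j) π, mul_assoc]
              exact add_le_add_left hint _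
          _ ≤ m := enn_arith hm1 ha1 (pow_le_one' hπ1 j) hπa
      · rw [hη0 u huD]
        rw [zero_add]
        calc π^(j+1) * m ≤ 1 * m := mul_le_mul_left (pow_le_one' hπ1 (j+1)) m
          _ = m := one_mul m
  -- conclude m = 0
  have hall : ∀ u, η u + π^K * m ≤ m := by
    intro u
    by_cases huD : u ∈ DL
    · exact main K u (hWle u huD)
    · rw [hη0 u huD, zero_add]
      calc π^K * m ≤ 1 * m := mul_le_mul_left (pow_le_one' hπ1 K) m
        _ = m := one_mul m
  have hm : m + π^K * m ≤ m := by
    have hfin : π^K * m ≠ ⊤ := by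
      exact (mul_le_of_le_one_left (zero_le) (pow_le_one' hπ1 K)).trans_lt
        (hm1.trans_lt one_lt_top) |>.ne
    have h1 : m ≤ m - π^K * m :=
      iSup_le fun u => ENNReal.le_sub_of_add_le_right hfin (hall u)
    calc m + π^K * m ≤ (m - π^K * m) + π^K * m := add_le_add_left h1 _
      _ ≤ m := tsub_add_cancel_of_le (mul_le_of_le_one_left (zero_le) (pow_le_one' hπ1 K)) |>.le
  have hc0 : π^K * m ≤ 0 := by
    have := (ENNReal.add_le_add_iff_left hmne).mp (by simpa using hm : m + π^K * m ≤ m + 0)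
    simpa using this
  have hm0 : m = 0 := by
    rcases mul_eq_zero.mp (le_antisymm hc0 (zero_le)) with h | h
    · exact absurd h (pow_ne_zero K hπpos.ne')
    · exact h
  intro u
  exact le_antisymm ((hηm u).trans hm0.le) (zero_le)


/-! ### Exceedance events -/

def excN (D : Set S) (Wf : S → ℝ) (L : ℝ) : ℕ → Set (ℕ → S) := fun N =>
  {ω | ∃ n ≤ N, (∀ j ≤ n, ω j ∈ D) ∧ L < Wf (ω n)}

lemma measurable_excN (D : Set S) (Wf : S → ℝ) (L : ℝ) (N : ℕ) :
    MeasurableSet (excN D Wf L N : Set (ℕ → S)) := by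
  have : excN D Wf L N = ⋃ n ∈ Finset.range (N+1),
      ((⋂ j ∈ Finset.range (n+1), {ω : ℕ → S | ω j ∈ D}) ∩ {ω : ℕ → S | L < Wf (ω n)}) := by
    ext ω
    simp only [excN, mem_setOf_eq, Finset.mem_range, mem_iUnion, mem_inter_iff, mem_iInter,
      Nat.lt_succ_iff]
    tauto
  rw [this]
  exact MeasurableSet.biUnion (Finset.range (N+1)).countable_toSet fun n _ =>
    (MeasurableSet.biInter (Finset.range (n+1)).countable_toSet fun j _ =>
      measurable_coordSet j D).inter (measurable_coordSet n {u | L < Wf u})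

lemma preim_excN_zero (D : Set S) (Wf : S → ℝ) (L : ℝ) (s : S) :
    consTraj s ⁻¹' excN D Wf L 0
      = if s ∈ D ∧ L < Wf s then (univ : Set (ℕ → S)) else ∅ := by
  ext ω
  by_cases hs : s ∈ D ∧ L < Wf s
  · rw [if_pos hs]
    simp only [mem_preimage, mem_univ, iff_true, excN, mem_setOf_eq]
    exact ⟨0, le_rfl, fun j hj => by simpa [Nat.le_zero.mp hj] using hs.1, by simpa using hs.2⟩
  · rw [if_neg hs]
    simp only [mem_preimage, mem_empty_iff_false, iff_false, excN, mem_setOf_eq]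
    rintro ⟨n, hn, hall, hL⟩
    rw [Nat.le_zero.mp hn] at hL
    exact hs ⟨by simpa using hall 0 (Nat.zero_le _), by simpa using hL⟩

lemma preim_excN_succ (D : Set S) (Wf : S → ℝ) (L : ℝ) (N : ℕ) (s : S) :
    consTraj s ⁻¹' excN D Wf L (N+1)
      = if s ∈ D then (if L < Wf s then (univ : Set (ℕ → S)) else excN D Wf L N) else ∅ := by
  ext ω
  by_cases hsD : s ∈ D
  · by_cases hsL : L < Wf s
    · simp only [hsD, hsL, if_true, mem_preimage, mem_univ, iff_true]
      exact ⟨0, Nat.zero_le _, fun j hj => by simpa [Nat.le_zero.mp hj] using hsD,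
        by simpa using hsL⟩
    · simp only [hsD, hsL, if_true, if_false, mem_preimage]
      constructor
      · rintro ⟨n, hn, hall, hL⟩
        cases n with
        | zero => exact absurd (by simpa using hL) hsL
        | succ n' =>
          refine ⟨n', Nat.lt_succ_iff.mp (Nat.lt_of_succ_le hn), fun j hj => ?_, by simpa using hL⟩
          have := hall (j+1) (Nat.succ_le_succ hj)
          simpa using this
      · rintro ⟨n, hn, hall, hL⟩
        refine ⟨n+1, Nat.succ_le_succ hn, fun j hj => ?_, by simpa using hL⟩
        cases j with
        | zero => simpa using hsD
        | succ j' => simpa using hall j' (Nat.succ_le_succ_iff.mp hj)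
  · simp only [hsD, if_false, mem_preimage, mem_empty_iff_false, iff_false]
    rintro ⟨n, hn, hall, hL⟩
    exact hsD (by simpa using hall 0 (Nat.zero_le n))

/-- Supermartingale exceedance bound (truncated). -/
lemma excN_bound (hT : IsTrajKernel P T) {D : Set S} (Wf : S → ℝ) {L : ℝ} (hL : 0 < L)
    (hWnn : ∀ u, 0 ≤ Wf u)
    (hsuper : ∀ u ∈ D, ∫⁻ u', ENNReal.ofReal (Wf u') ∂(P u) ≤ ENNReal.ofReal (Wf u)) :
    ∀ N s, T s (excN D Wf L N)
      ≤ (if s ∈ D then min 1 (ENNReal.ofReal (Wf s) / ENNReal.ofReal L) else 0) := by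
  have hLne : ENNReal.ofReal L ≠ 0 := (ENNReal.ofReal_pos.mpr hL).ne'
  have hLnetop : ENNReal.ofReal L ≠ ⊤ := ENNReal.ofReal_ne_top
  have hphi : ∀ u, (if u ∈ D then min 1 (ENNReal.ofReal (Wf u) / ENNReal.ofReal L) else 0)
      ≤ ENNReal.ofReal (Wf u) / ENNReal.ofReal L := by
    intro u
    by_cases hu : u ∈ D <;> simp [hu, min_le_right]
  intro N
  induction N with
  | zero =>
    intro s
    rw [T_apply P T hT (measurable_excN D Wf L 0) s, preim_excN_zero]
    by_cases hs : s ∈ D ∧ L < Wf s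
    · simp only [hs, if_true]
      have h1 : ENNReal.ofReal L ≤ ENNReal.ofReal (Wf s) :=
        ENNReal.ofReal_le_ofReal hs.2.le
      have : (1 : ℝ≥0∞) ≤ ENNReal.ofReal (Wf s) / ENNReal.ofReal L :=
        ENNReal.le_div_iff_mul_le (Or.inl hLne) (Or.inl hLnetop) |>.mpr (by simpa using h1)
      simp [hs.1, min_eq_left this]
    · simp only [hs, if_false]
      simp
  | succ N ih =>
    intro s
    rw [T_apply P T hT (measurable_excN D Wf L (N+1)) s, preim_excN_succ]
    by_cases hsD : s ∈ D
    · by_cases hsL : L < Wf s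
      · simp only [hsD, hsL, if_true]
        have h1 : ENNReal.ofReal L ≤ ENNReal.ofReal (Wf s) :=
          ENNReal.ofReal_le_ofReal hsL.le
        have h2 : (1 : ℝ≥0∞) ≤ ENNReal.ofReal (Wf s) / ENNReal.ofReal L :=
          ENNReal.le_div_iff_mul_le (Or.inl hLne) (Or.inl hLnetop) |>.mpr (by simpa using h1)
        have he : ∫⁻ u, T u univ ∂(P s) = 1 := by simp
        rw [he]
        exact le_min le_rfl h2
      · simp only [hsD, hsL, if_true, if_false]
        have hstep : ∫⁻ u, T u (excN D Wf L N) ∂(P s)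
            ≤ ∫⁻ u, ENNReal.ofReal (Wf u) / ENNReal.ofReal L ∂(P s) :=
          lintegral_mono fun u => (ih u).trans (hphi u)
        have hdiv : ∫⁻ u, ENNReal.ofReal (Wf u) / ENNReal.ofReal L ∂(P s)
            = (∫⁻ u, ENNReal.ofReal (Wf u) ∂(P s)) / ENNReal.ofReal L := by
          simp only [div_eq_mul_inv]
          rw [lintegral_mul_const _ (Measurable.of_discrete.ennreal_ofReal)]
        have hbound : ∫⁻ u, T u (excN D Wf L N) ∂(P s)
            ≤ ENNReal.ofReal (Wf s) / ENNReal.ofReal L := by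
          rw [hdiv] at hstep
          exact hstep.trans (ENNReal.div_le_div_right (hsuper s hsD) _)
        exact le_min (by
          calc ∫⁻ u, T u (excN D Wf L N) ∂(P s) ≤ ∫⁻ u, 1 ∂(P s) :=
              lintegral_mono fun u => prob_le_one
            _ = 1 := by simp) hbound
    · simp only [hsD, if_false]
      simp


/-- The W-supermartingale escape lemma: the region `D` (where `W` is positive, a
supermartingale, and has antitone drift) is almost surely left. -/
lemma theta_zero (hT : IsTrajKernel P T) {D : Set S} (Wf : S → ℝ) (dd pp : ℝ → ℝ)
    (hWnn : ∀ u, 0 ≤ Wf u) (hWpos : ∀ u ∈ D, 0 < Wf u)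
    (hsuper : ∀ u ∈ D, ∫⁻ u', ENNReal.ofReal (Wf u') ∂(P u) ≤ ENNReal.ofReal (Wf u))
    (hdriftD : ∀ u ∈ D, ENNReal.ofReal (pp (Wf u)) ≤ P u {u' | Wf u' ≤ Wf u - dd (Wf u)})
    (hdpos : ∀ r, 0 ≤ r → 0 < dd r) (hppos : ∀ r, 0 ≤ r → 0 < pp r)
    (hple : ∀ r, 0 ≤ r → pp r ≤ 1)
    (hpanti : ∀ r₁ r₂, 0 < r₁ → r₁ ≤ r₂ → pp r₂ ≤ pp r₁)
    (hdanti : ∀ r₁ r₂, 0 < r₁ → r₁ ≤ r₂ → dd r₂ ≤ dd r₁) :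
    ∀ u, T u (invEvent D) = 0 := by
  have main : ∀ L : ℝ, 0 < L → ∀ u₀,
      T u₀ (invEvent D) ≤ ENNReal.ofReal (Wf u₀) / ENNReal.ofReal L := by
    intro L hL u₀
    set DL : Set S := {u | u ∈ D ∧ Wf u ≤ L} with hDLdef
    have hddL : 0 < dd L := hdpos L hL.le
    -- the bounded region DL is a.s. left
    have heta : ∀ u, T u (invEvent DL) = 0 := by
      apply eta_zero P T hT Wf (dd L) (pp L) (Nat.ceil (L / dd L))
        (hppos L hL.le) (hple L hL.le) (fun u hu => hWpos u hu.1)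
      · intro u hu
        have h1 : L ≤ (Nat.ceil (L / dd L) : ℝ) * dd L := by
          have h2 : L / dd L ≤ (Nat.ceil (L / dd L) : ℝ) := Nat.le_ceil _
          calc L = (L / dd L) * dd L := by field_simp
            _ ≤ (Nat.ceil (L / dd L) : ℝ) * dd L :=
                mul_le_mul_of_nonneg_right h2 hddL.le
        exact hu.2.trans h1
      · intro u hu
        have hWu : 0 < Wf u := hWpos u hu.1
        have hsub : {u' | Wf u' ≤ Wf u - dd (Wf u)} ⊆ {u' | Wf u' ≤ Wf u - dd L} := by
          intro u' hu'
          have : dd L ≤ dd (Wf u) := hdanti (Wf u) L hWu hu.2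
          simp only [mem_setOf_eq] at hu' ⊢
          linarith
        calc ENNReal.ofReal (pp L) ≤ ENNReal.ofReal (pp (Wf u)) :=
              ENNReal.ofReal_le_ofReal (hpanti (Wf u) L hWu hu.2)
          _ ≤ P u {u' | Wf u' ≤ Wf u - dd (Wf u)} := hdriftD u hu.1
          _ ≤ P u {u' | Wf u' ≤ Wf u - dd L} := measure_mono hsub
    -- decomposition
    have hdecomp : invEvent D ⊆ (⋃ N, excN D Wf L N) ∪ invEvent DL := by
      intro ω hω
      by_cases hb : ∀ n, Wf (ω n) ≤ L
      · exact Or.inr fun n => ⟨hω n, hb n⟩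
      · push_neg at hb
        obtain ⟨n, hn⟩ := hb
        exact Or.inl (mem_iUnion.mpr ⟨n, ⟨n, le_rfl, fun j _ => hω j, hn⟩⟩)
    have hmono : Monotone (excN D Wf L) := by
      intro N M hNM ω hω
      obtain ⟨n, hn, h⟩ := hω
      exact ⟨n, hn.trans hNM, h⟩
    calc T u₀ (invEvent D)
        ≤ T u₀ ((⋃ N, excN D Wf L N) ∪ invEvent DL) := measure_mono hdecomp
      _ ≤ T u₀ (⋃ N, excN D Wf L N) + T u₀ (invEvent DL) := measure_union_le _ _
      _ = T u₀ (⋃ N, excN D Wf L N) := by rw [heta u₀, add_zero]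
      _ = ⨆ N, T u₀ (excN D Wf L N) := hmono.directed_le.measure_iUnion
      _ ≤ ENNReal.ofReal (Wf u₀) / ENNReal.ofReal L := by
          apply iSup_le
          intro N
          refine (excN_bound P T hT Wf hL hWnn hsuper N u₀).trans ?_
          by_cases hu : u₀ ∈ D <;> simp [hu, min_le_right]
  -- let L → ∞
  intro u₀
  by_contra hne
  set θ := T u₀ (invEvent D) with hθdef
  have hθ1 : θ ≤ 1 := prob_le_one
  have hθtop : θ ≠ ⊤ := (hθ1.trans_lt one_lt_top).ne
  have hdivne : ENNReal.ofReal (Wf u₀) / θ ≠ ⊤ := by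
    intro h
    rcases ENNReal.div_eq_top.mp h with ⟨-, h0⟩ | ⟨htop, -⟩
    · exact hne h0
    · exact ENNReal.ofReal_ne_top htop
  obtain ⟨n, hn⟩ := ENNReal.exists_nat_gt hdivne
  have hLpos : (0:ℝ) < (n:ℝ) + 1 := by positivity
  have hb := main ((n:ℝ)+1) hLpos u₀
  have hmul : θ * ENNReal.ofReal ((n:ℝ)+1) ≤ ENNReal.ofReal (Wf u₀) :=
    (ENNReal.le_div_iff_mul_le (Or.inl (ENNReal.ofReal_pos.mpr hLpos).ne')
      (Or.inl ENNReal.ofReal_ne_top)).mp hb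
  have hlt : ENNReal.ofReal (Wf u₀) < (n : ℝ≥0∞) * θ :=
    (ENNReal.div_lt_iff (Or.inl hne) (Or.inl hθtop)).mp hn
  have hnc : (n : ℝ≥0∞) ≤ ENNReal.ofReal ((n:ℝ)+1) := by
    rw [← ENNReal.ofReal_natCast n]
    exact ENNReal.ofReal_le_ofReal (by linarith)
  have : ENNReal.ofReal (Wf u₀) < ENNReal.ofReal (Wf u₀) :=
    hlt.trans_le ((mul_le_mul_left hnc θ).trans (by rwa [mul_comm] at hmul))
  exact lt_irrefl _ this


/-! ### The alternation sequence G_n -/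

def reachTr (X : Set S) (Y : Set (ℕ → S)) (N : ℕ) : Set (ℕ → S) :=
  {ω | ∃ m ≤ N, ω m ∈ X ∧ shift^[m] ω ∈ Y}

def GK (C JX AX : Set S) : ℕ → Set (ℕ → S)
  | 0 => univ
  | n+1 => invEvent C ∩ reachSet JX (shift ⁻¹' (reachSet AX (GK C JX AX n)))

lemma measurable_reachTr (X : Set S) {Y : Set (ℕ → S)} (hY : MeasurableSet Y) (N : ℕ) :
    MeasurableSet (reachTr X Y N : Set (ℕ → S)) := by
  have : reachTr X Y N = ⋃ m ∈ Finset.range (N+1),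
      ({ω : ℕ → S | ω m ∈ X} ∩ shift^[m] ⁻¹' Y) := by
    ext ω; simp only [reachTr, mem_setOf_eq, mem_iUnion, mem_inter_iff, Finset.mem_range,
      Nat.lt_succ_iff, mem_preimage]; tauto
  rw [this]
  exact MeasurableSet.biUnion (Finset.range (N+1)).countable_toSet fun m _ =>
    (measurable_coordSet m X).inter ((measurable_shift.iterate m) hY)

lemma measurable_GK (C JX AX : Set S) (n : ℕ) :
    MeasurableSet (GK C JX AX n : Set (ℕ → S)) := by
  induction n with
  | zero => exact MeasurableSet.univ
  | succ n ih =>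
    exact (measurable_invEvent C).inter
      (measurable_reachSet JX (measurable_shift (measurable_reachSet AX ih)))

lemma shift_iter_shift (m : ℕ) (ω : ℕ → S) : shift^[m] (shift ω) = shift^[m+1] ω :=
  (Function.iterate_succ_apply shift m ω).symm

lemma shift_iter_add (a b : ℕ) (ω : ℕ → S) : shift^[a] (shift^[b] ω) = shift^[a+b] ω :=
  (Function.iterate_add_apply shift a b ω).symm

lemma shift_shift_iter (m : ℕ) (ω : ℕ → S) : shift (shift^[m] ω) = shift^[m+1] ω :=
  (Function.iterate_succ_apply' shift m ω).symm

lemma GK_futureA {C JX AX : Set S} (n : ℕ) :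
    ∀ ω ∈ invEvent C, ω 0 ∈ AX →
      (∃ m, ω m ∈ AX ∧ shift^[m] ω ∈ GK C JX AX n) → ω ∈ GK C JX AX n := by
  cases n with
  | zero => intro ω _ _ _; trivial
  | succ n =>
    rintro ω hinv - ⟨m, hmA, htinv, j, hjJ, hjK⟩
    refine ⟨hinv, j + m, ?_, ?_⟩
    · rw [← shift_iter_apply m j ω]; exact hjJ
    · rw [← shift_iter_add j m ω]; exact hjK

lemma GK_futureJ {C JX AX : Set S} (n : ℕ) :
    ∀ ω ∈ invEvent C, ω 0 ∈ JX →
      (∃ m, ω m ∈ JX ∧ shift^[m] ω ∈ shift ⁻¹' (reachSet AX (GK C JX AX n))) →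
      ω ∈ shift ⁻¹' (reachSet AX (GK C JX AX n)) := by
  rintro ω hinv - ⟨m, hmJ, htail⟩
  rw [mem_preimage, shift_shift_iter] at htail
  obtain ⟨j, hjA, hjG⟩ := htail
  rw [shift_iter_apply] at hjA
  rw [shift_iter_add] at hjG
  rw [mem_preimage]
  refine ⟨j + m, ?_, ?_⟩
  · show ω ((j + m) + 1) ∈ _
    have he : j + m + 1 = j + (m + 1) := by omega
    rw [he]; exact hjA
  · show shift^[j+m] (shift ω) ∈ _
    rw [shift_iter_shift]
    have he : j + m + 1 = j + (m + 1) := by omega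
    rw [he]; exact hjG

lemma KX_subset_reach {AX : Set S} {G : Set (ℕ → S)} :
    (shift ⁻¹' (reachSet AX G) : Set (ℕ → S)) ⊆ reachSet AX G := by
  rintro ω ⟨j, hjA, hjG⟩
  refine ⟨j + 1, ?_, ?_⟩
  · exact hjA
  · rw [← shift_iter_shift]; exact hjG

lemma preim_inv_reachTr {C X : Set S} {Y : Set (ℕ → S)} {s : S} (hsC : s ∈ C) (hsX : s ∉ X)
    (N : ℕ) : consTraj s ⁻¹' (invEvent C ∩ reachTr X Y (N+1)) = invEvent C ∩ reachTr X Y N := by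
  ext ω
  simp only [mem_preimage, mem_inter_iff, preim_invEvent]
  constructor
  · rintro ⟨hinv, m, hm, hmX, hmY⟩
    have hinv' : ω ∈ invEvent C := by
      intro n; exact hinv (n+1)
    cases m with
    | zero => exact absurd hmX hsX
    | succ m' =>
      refine ⟨hinv', m', Nat.lt_succ_iff.mp (Nat.lt_of_succ_le hm), by simpa using hmX, ?_⟩
      rw [shift_iter_consTraj] at hmY
      exact hmY
  · rintro ⟨hinv, m, hm, hmX, hmY⟩
    refine ⟨?_, m+1, Nat.succ_le_succ hm, by simpa using hmX, ?_⟩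
    · intro n; cases n with
      | zero => simpa using hsC
      | succ n' => exact hinv n'
    · rw [shift_iter_consTraj]
      exact hmY

lemma inv_inter_reach_eq_iUnion {C X : Set S} {Y : Set (ℕ → S)} :
    invEvent C ∩ reachSet X Y = ⋃ N, (invEvent C ∩ reachTr X Y N) := by
  ext ω
  simp only [mem_inter_iff, mem_iUnion, reachSet, reachTr, mem_setOf_eq]
  constructor
  · rintro ⟨hinv, m, hm⟩
    exact ⟨m, hinv, m, le_rfl, hm⟩
  · rintro ⟨N, hinv, m, _, hm⟩
    exact ⟨hinv, m, hm⟩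

/-- The main geometric-decay bound on the alternation sequence. -/
lemma GK_bound (hT : IsTrajKernel P T) {C AX JX : Set S} (Vf : S → ℝ) {κ : ℝ≥0∞}
    (hVnn : ∀ s, 0 ≤ Vf s)
    (hsuperV : ∀ s, s ∉ AX → ∫⁻ u, ENNReal.ofReal (Vf u) ∂(P s) ≤ ENNReal.ofReal (Vf s))
    (hbV : ∀ s ∈ AX, 1 ≤ Vf s)
    (hJV : ∀ s ∈ JX, ENNReal.ofReal (Vf s) ≤ κ)
    (hJA : ∀ s ∈ JX, s ∉ AX)
    (hκ1 : κ ≤ 1) :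
    ∀ n s, T s (GK C JX AX n) ≤ κ ^ n := by
  intro n
  induction n with
  | zero => intro s; simpa using (prob_le_one : T s (GK C JX AX 0) ≤ 1)
  | succ n ih =>
    set G := GK C JX AX n with hGdef
    set c := κ ^ n with hcdef
    have hGmeas : MeasurableSet G := measurable_GK C JX AX n
    -- (b1)
    have b1 : ∀ s, T s (invEvent C ∩ reachSet AX G) ≤ c := by
      intro s
      apply reach_bound P T hT hGmeas
      · intro u hu
        exact (measure_mono inter_subset_right).trans (ih u)
      · exact GK_futureA n
    -- truncated-reach induction
    set ρ : S → ℝ≥0∞ := fun s =>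
      if s ∈ AX then c else min c (ENNReal.ofReal (Vf s) * c) with hρdef
    have hρle : ∀ u, ρ u ≤ ENNReal.ofReal (Vf u) * c := by
      intro u
      by_cases hu : u ∈ AX
      · simp only [hρdef, hu, if_true]
        calc c = 1 * c := (one_mul c).symm
          _ ≤ ENNReal.ofReal (Vf u) * c := by
            apply mul_le_mul_left
            rw [← ENNReal.ofReal_one]
            exact ENNReal.ofReal_le_ofReal (hbV u hu)
      · simp only [hρdef, hu, if_false]
        exact min_le_right _ _
    have hρc : ∀ u, ρ u ≤ c := by
      intro u
      by_cases hu : u ∈ AX <;> simp [hρdef, hu, min_le_left]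
    have hrN : ∀ N s, T s (invEvent C ∩ reachTr AX G N) ≤ ρ s := by
      intro N
      induction N with
      | zero =>
        intro s
        by_cases hsA : s ∈ AX
        · refine le_trans (measure_mono ?_) ((b1 s).trans_eq ?_)
          · rintro ω ⟨hinv, m, _, hm⟩
            exact ⟨hinv, m, hm⟩
          · simp [hρdef, hsA]
        · have h0 : T s (invEvent C ∩ reachTr AX G 0) = 0 := by
            apply T_coord0 P T hT AX hsA
              ((measurable_invEvent C).inter (measurable_reachTr AX hGmeas 0))
            rintro ω ⟨-, m, hm, hmX, -⟩
            rw [Nat.le_zero.mp hm] at hmX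
            exact hmX
          rw [h0]; exact zero_le
      | succ N ihN =>
        intro s
        by_cases hsC : s ∈ C
        · by_cases hsA : s ∈ AX
          · refine le_trans (measure_mono ?_) ((b1 s).trans_eq ?_)
            · rintro ω ⟨hinv, m, _, hm⟩
              exact ⟨hinv, m, hm⟩
            · simp [hρdef, hsA]
          · rw [T_apply P T hT ((measurable_invEvent C).inter
              (measurable_reachTr AX hGmeas (N+1))) s, preim_inv_reachTr hsC hsA]
            have step1 : ∫⁻ u, T u (invEvent C ∩ reachTr AX G N) ∂(P s)
                ≤ ∫⁻ u, ρ u ∂(P s) := lintegral_mono fun u => ihN u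
            have hρs : ρ s = min c (ENNReal.ofReal (Vf s) * c) := by simp [hρdef, hsA]
            rw [hρs]
            refine step1.trans (le_min ?_ ?_)
            · calc ∫⁻ u, ρ u ∂(P s) ≤ ∫⁻ u, c ∂(P s) := lintegral_mono hρc
                _ = c := by simp
            · calc ∫⁻ u, ρ u ∂(P s)
                  ≤ ∫⁻ u, ENNReal.ofReal (Vf u) * c ∂(P s) := lintegral_mono hρle
                _ = (∫⁻ u, ENNReal.ofReal (Vf u) ∂(P s)) * c := by
                    rw [lintegral_mul_const _ Measurable.of_discrete.ennreal_ofReal]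
                _ ≤ ENNReal.ofReal (Vf s) * c := mul_le_mul_left (hsuperV s hsA) c
        · have h0 : T s (invEvent C ∩ reachTr AX G (N+1)) = 0 := by
            apply T_coord0 P T hT C hsC
              ((measurable_invEvent C).inter (measurable_reachTr AX hGmeas (N+1)))
            rintro ω ⟨hinv, -⟩
            exact hinv 0
          rw [h0]; exact zero_le
    -- limit over N
    have hreach : ∀ s, T s (invEvent C ∩ reachSet AX G) ≤ ρ s := by
      intro s
      rw [inv_inter_reach_eq_iUnion]
      have hmono : Monotone (fun N => invEvent C ∩ reachTr AX G N) := by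
        intro N M hNM ω hω
        obtain ⟨hinv, m, hm, h⟩ := hω
        exact ⟨hinv, m, hm.trans hNM, h⟩
      rw [hmono.directed_le.measure_iUnion]
      exact iSup_le fun N => hrN N s
    -- (b2)
    have b2 : ∀ u ∈ JX, T u (invEvent C ∩ shift ⁻¹' (reachSet AX G)) ≤ κ ^ (n+1) := by
      intro u hu
      have h1 : T u (invEvent C ∩ shift ⁻¹' (reachSet AX G))
          ≤ T u (invEvent C ∩ reachSet AX G) :=
        measure_mono (inter_subset_inter_right _ KX_subset_reach)
      refine h1.trans ((hreach u).trans ?_)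
      have huA : u ∉ AX := hJA u hu
      simp only [hρdef, huA, if_false]
      calc min c (ENNReal.ofReal (Vf u) * c) ≤ ENNReal.ofReal (Vf u) * c := min_le_right _ _
        _ ≤ κ * c := mul_le_mul_left (hJV u hu) c
        _ = κ ^ (n+1) := by rw [hcdef, pow_succ, mul_comm]
    -- (b3)
    intro s
    exact reach_bound P T hT (measurable_shift (measurable_reachSet AX hGmeas)) b2
      (GK_futureJ n) s


lemma measurable_infVisits (X : Set S) : MeasurableSet (infVisits X : Set (ℕ → S)) := by
  have : infVisits X = ⋂ n, ⋃ m, ⋃ (_ : n ≤ m), {ω : ℕ → S | ω m ∈ X} := by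
    ext ω; simp [infVisits]
  rw [this]
  exact MeasurableSet.iInter fun n => MeasurableSet.iUnion fun m =>
    MeasurableSet.iUnion fun _ => measurable_coordSet m X

lemma infVisits_shift_iter {X : Set S} {ω : ℕ → S} (h : ω ∈ infVisits X) (N : ℕ) :
    shift^[N] ω ∈ infVisits X := by
  intro n
  obtain ⟨m, hm, hmX⟩ := h (n + N)
  refine ⟨m - N, by omega, ?_⟩
  rw [shift_iter_apply]
  have : m - N + N = m := by omega
  rw [this]; exact hmX

lemma not_finVisits {X : Set S} {ω : ℕ → S} (h : ω ∉ finVisits X) : ω ∈ infVisits X := by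
  simp only [finVisits, mem_setOf_eq, not_exists, not_forall] at h
  intro n
  obtain ⟨m, hm, hmX⟩ := h n
  exact ⟨m, hm, not_not.mp hmX⟩

lemma E''_subset_GK {C AX JX : Set S} :
    ∀ n, invEvent C ∩ infVisits AX ∩ infVisits JX ⊆ GK C JX AX n := by
  intro n
  induction n with
  | zero => intro ω _; trivial
  | succ n ih =>
    rintro ω ⟨⟨hinv, hA⟩, hJ⟩
    obtain ⟨m, -, hmJ⟩ := hJ 0
    refine ⟨hinv, m, hmJ, ?_⟩
    rw [mem_preimage, shift_shift_iter]
    obtain ⟨m₂, hm₂, hm₂A⟩ := hA (m + 1)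
    refine ⟨m₂ - (m+1), ?_, ?_⟩
    · rw [shift_iter_apply]
      have : m₂ - (m+1) + (m+1) = m₂ := by omega
      rw [this]; exact hm₂A
    · rw [shift_iter_add]
      have : m₂ - (m+1) + (m+1) = m₂ := by omega
      rw [this]
      exact ih ⟨⟨invEvent_shift_iter hinv m₂, infVisits_shift_iter hA m₂⟩,
        infVisits_shift_iter hJ m₂⟩

/-- Part II: each liveness component holds almost surely from any state. -/
lemma partII (hT : IsTrajKernel P T) {AX BX JX I : Set S} (Vf Wf : S → ℝ) (dd pp : ℝ → ℝ)
    (γ : ℝ) (hγ : 0 < γ)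
    (hVnn : ∀ s, 0 ≤ Vf s) (hWnn : ∀ s, 0 ≤ Wf s)
    (hdpos : ∀ r : ℝ, 0 ≤ r → 0 < dd r)
    (hppos : ∀ r : ℝ, 0 ≤ r → 0 < pp r)
    (hple : ∀ r : ℝ, 0 ≤ r → pp r ≤ 1)
    (hJsub : JX ⊆ I \ AX)
    (hsuperV : ∀ s ∉ AX, ∫⁻ u, ENNReal.ofReal (Vf u) ∂(P s) ≤ ENNReal.ofReal (Vf s))
    (hbV : ∀ s ∈ AX, 1 ≤ Vf s)
    (hcV : ∀ s ∈ JX, Vf s ≤ 1 - γ)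
    (hWpos : ∀ s ∈ I \ (BX ∪ JX), 0 < Wf s)
    (hsuperW : ∀ s ∈ I \ (BX ∪ JX),
      ∫⁻ u, ENNReal.ofReal (Wf u) ∂(P s) ≤ ENNReal.ofReal (Wf s))
    (hdriftW : ∀ r : ℝ, 0 < r → ∀ s ∈ I \ (BX ∪ JX), Wf s = r →
      ENNReal.ofReal (pp r) ≤ P s {s' | Wf s' ≤ r - dd r})
    (hpanti : ∀ r₁ r₂ : ℝ, 0 < r₁ → r₁ ≤ r₂ → pp r₂ ≤ pp r₁)
    (hdanti : ∀ r₁ r₂ : ℝ, 0 < r₁ → r₁ ≤ r₂ → dd r₂ ≤ dd r₁) :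
    ∀ s, T s (invEvent I ∩ infVisits AX ∩ (infVisits BX)ᶜ) = 0 := by
  classical
  set D : Set S := I \ (BX ∪ JX) with hDdef
  set C : Set S := I \ BX with hCdef
  -- step 1: the W-region D is a.s. left
  have θ0 : ∀ u, T u (invEvent D) = 0 := by
    apply theta_zero P T hT Wf dd pp hWnn hWpos hsuperW
      (fun u hu => hdriftW (Wf u) (hWpos u hu) u hu rfl) hdpos hppos hple hpanti hdanti
  -- step 2: the alternation bound
  set κ : ℝ≥0∞ := ENNReal.ofReal (1 - γ) with hκdef
  have hκ1 : κ ≤ 1 := ENNReal.ofReal_le_one.mpr (by linarith)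
  have hκlt : κ < 1 := ENNReal.ofReal_lt_one.mpr (by linarith)
  have hGK : ∀ n s, T s (GK C JX AX n) ≤ κ ^ n := by
    apply GK_bound P T hT Vf hVnn hsuperV hbV
      (fun s hs => ENNReal.ofReal_le_ofReal (hcV s hs))
      (fun s hs => (hJsub hs).2) hκ1
  have hE'' : ∀ s, T s (invEvent C ∩ infVisits AX ∩ infVisits JX) = 0 := by
    intro s
    have hle : ∀ n, T s (invEvent C ∩ infVisits AX ∩ infVisits JX) ≤ κ ^ n :=
      fun n => (measure_mono (E''_subset_GK n)).trans (hGK n s)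
    have htend : Tendsto (fun n : ℕ => κ ^ n) atTop (nhds 0) :=
      ENNReal.tendsto_pow_atTop_nhds_zero_of_lt_one hκlt
    exact le_antisymm (ge_of_tendsto' htend hle) (zero_le)
  -- step 3: kill E' = invEvent C ∩ infVisits AX
  have hE'meas : MeasurableSet (invEvent C ∩ infVisits AX) :=
    (measurable_invEvent C).inter (measurable_infVisits AX)
  have hE' : ∀ s, T s (invEvent C ∩ infVisits AX) = 0 := by
    intro s
    refine le_antisymm ?_ (zero_le)
    have hsub : invEvent C ∩ infVisits AX ⊆
        (invEvent C ∩ infVisits AX ∩ infVisits JX) ∪ ⋃ N, shift^[N] ⁻¹' (invEvent D) := by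
      rintro ω ⟨hinv, hA⟩
      by_cases hJ : ω ∈ infVisits JX
      · exact Or.inl ⟨⟨hinv, hA⟩, hJ⟩
      · simp only [infVisits, mem_setOf_eq, not_forall] at hJ
        obtain ⟨N, hN⟩ := hJ
        push_neg at hN
        refine Or.inr (mem_iUnion.mpr ⟨N, ?_⟩)
        intro n
        rw [shift_iter_apply]
        have h1 : ω (n + N) ∈ C := hinv (n + N)
        have h2 : ω (n + N) ∉ JX := hN (n + N) (by omega)
        exact ⟨h1.1, fun hmem => hmem.elim h1.2 h2⟩
    calc T s (invEvent C ∩ infVisits AX)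
        ≤ T s ((invEvent C ∩ infVisits AX ∩ infVisits JX)
            ∪ ⋃ N, shift^[N] ⁻¹' (invEvent D)) := measure_mono hsub
      _ ≤ T s (invEvent C ∩ infVisits AX ∩ infVisits JX)
            + T s (⋃ N, shift^[N] ⁻¹' (invEvent D)) := measure_union_le _ _
      _ ≤ 0 + ∑' N, T s (shift^[N] ⁻¹' (invEvent D)) := by
          rw [hE'' s]
          exact add_le_add_right (measure_iUnion_le _) 0
      _ = 0 := by
          rw [zero_add]
          have : ∀ N, T s (shift^[N] ⁻¹' (invEvent D)) = 0 :=
            fun N => T_shift_iter_zero P T hT (measurable_invEvent D) θ0 N s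
          simp [this]
  -- step 4: conclude
  intro s
  refine le_antisymm ?_ (zero_le)
  have hsub : invEvent I ∩ infVisits AX ∩ (infVisits BX)ᶜ
      ⊆ ⋃ N, shift^[N] ⁻¹' (invEvent C ∩ infVisits AX) := by
    rintro ω ⟨⟨hinv, hA⟩, hB⟩
    have : ∃ N, ∀ m, N ≤ m → ω m ∉ BX := by
      by_contra h
      push_neg at h
      exact hB fun n => by
        obtain ⟨m, hm, hmB⟩ := h n
        exact ⟨m, hm, hmB⟩
    obtain ⟨N, hN⟩ := this
    refine mem_iUnion.mpr ⟨N, ?_, infVisits_shift_iter hA N⟩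
    intro n
    rw [shift_iter_apply]
    exact ⟨hinv (n + N), hN (n + N) (by omega)⟩
  calc T s (invEvent I ∩ infVisits AX ∩ (infVisits BX)ᶜ)
      ≤ T s (⋃ N, shift^[N] ⁻¹' (invEvent C ∩ infVisits AX)) := measure_mono hsub
    _ ≤ ∑' N, T s (shift^[N] ⁻¹' (invEvent C ∩ infVisits AX)) := measure_iUnion_le _
    _ = 0 := by
        have : ∀ N, T s (shift^[N] ⁻¹' (invEvent C ∩ infVisits AX)) = 0 :=
          fun N => T_shift_iter_zero P T hT hE'meas hE' N s
        simp only [this, tsum_zero]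


/-! ### Part I: the safety bound -/

def escN (I : Set S) : ℕ → Set (ℕ → S) := fun N => {ω | ∃ m ≤ N, ω m ∉ I}

lemma measurable_escN (I : Set S) (N : ℕ) : MeasurableSet (escN I N : Set (ℕ → S)) := by
  have : escN I N = ⋃ m ∈ Finset.range (N+1), {ω : ℕ → S | ω m ∈ Iᶜ} := by
    ext ω; simp [escN, Nat.lt_succ_iff]
  rw [this]
  exact MeasurableSet.biUnion (Finset.range (N+1)).countable_toSet fun m _ =>
    measurable_coordSet m Iᶜ

lemma preim_escN_zero (I : Set S) (s : S) :
    consTraj s ⁻¹' escN I 0 = if s ∈ I then (∅ : Set (ℕ → S)) else univ := by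
  ext ω
  by_cases hs : s ∈ I
  · rw [if_pos hs]
    simp only [mem_preimage, mem_empty_iff_false, iff_false, escN, mem_setOf_eq]
    rintro ⟨m, hm, hmI⟩
    rw [Nat.le_zero.mp hm] at hmI
    exact hmI hs
  · rw [if_neg hs]
    simp only [mem_preimage, mem_univ, iff_true, escN, mem_setOf_eq]
    exact ⟨0, le_rfl, hs⟩

lemma preim_escN_succ (I : Set S) (N : ℕ) (s : S) :
    consTraj s ⁻¹' escN I (N+1) = if s ∈ I then escN I N else univ := by
  ext ω
  by_cases hs : s ∈ I
  · rw [if_pos hs]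
    simp only [mem_preimage, escN, mem_setOf_eq]
    constructor
    · rintro ⟨m, hm, hmI⟩
      cases m with
      | zero => exact absurd hs (by simpa using hmI)
      | succ m' => exact ⟨m', Nat.lt_succ_iff.mp (Nat.lt_of_succ_le hm), by simpa using hmI⟩
    · rintro ⟨m, hm, hmI⟩
      exact ⟨m+1, Nat.succ_le_succ hm, by simpa using hmI⟩
  · rw [if_neg hs]
    simp only [mem_preimage, mem_univ, iff_true, escN, mem_setOf_eq]
    exact ⟨0, Nat.zero_le _, hs⟩

lemma escN_bound (hT : IsTrajKernel P T) {I : Set S} (V₀ : S → ℝ)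
    (hinv : ∀ s ∈ I, ∫⁻ u, ENNReal.ofReal (V₀ u) ∂(P s) ≤ ENNReal.ofReal (V₀ s))
    (hout : ∀ s ∉ I, 1 ≤ V₀ s) :
    ∀ N s, T s (escN I N) ≤ min 1 (ENNReal.ofReal (V₀ s)) := by
  have hone : ∀ s, s ∉ I → (1 : ℝ≥0∞) ≤ ENNReal.ofReal (V₀ s) := by
    intro s hs
    rw [← ENNReal.ofReal_one]
    exact ENNReal.ofReal_le_ofReal (hout s hs)
  intro N
  induction N with
  | zero =>
    intro s
    rw [T_apply P T hT (measurable_escN I 0) s, preim_escN_zero]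
    by_cases hs : s ∈ I
    · simp [hs]
    · simp only [hs, if_false]
      have : ∫⁻ u, T u (univ : Set (ℕ → S)) ∂(P s) = 1 := by simp
      rw [this]
      exact le_min le_rfl (hone s hs)
  | succ N ih =>
    intro s
    rw [T_apply P T hT (measurable_escN I (N+1)) s, preim_escN_succ]
    by_cases hs : s ∈ I
    · simp only [hs, if_true]
      refine le_min ?_ ?_
      · calc ∫⁻ u, T u (escN I N) ∂(P s) ≤ ∫⁻ u, 1 ∂(P s) :=
            lintegral_mono fun u => prob_le_one
          _ = 1 := by simp
      · calc ∫⁻ u, T u (escN I N) ∂(P s)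
            ≤ ∫⁻ u, ENNReal.ofReal (V₀ u) ∂(P s) :=
              lintegral_mono fun u => (ih u).trans (min_le_right _ _)
          _ ≤ ENNReal.ofReal (V₀ s) := hinv s hs
    · simp only [hs, if_false]
      have : ∫⁻ u, T u (univ : Set (ℕ → S)) ∂(P s) = 1 := by simp
      rw [this]
      exact le_min le_rfl (hone s hs)

lemma esc_bound (hT : IsTrajKernel P T) {I : Set S} (V₀ : S → ℝ)
    (hinv : ∀ s ∈ I, ∫⁻ u, ENNReal.ofReal (V₀ u) ∂(P s) ≤ ENNReal.ofReal (V₀ s))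
    (hout : ∀ s ∉ I, 1 ≤ V₀ s) :
    ∀ s, T s ((invEvent I)ᶜ) ≤ ENNReal.ofReal (V₀ s) := by
  intro s
  have hcompl : (invEvent I)ᶜ = ⋃ N, escN I N := by
    ext ω
    simp only [mem_compl_iff, invEvent, mem_setOf_eq, not_forall, mem_iUnion, escN]
    constructor
    · rintro ⟨n, hn⟩; exact ⟨n, n, le_rfl, hn⟩
    · rintro ⟨N, m, -, hm⟩; exact ⟨m, hm⟩
  have hmono : Monotone (escN I) := by
    rintro N M hNM ω ⟨m, hm, h⟩
    exact ⟨m, hm.trans hNM, h⟩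
  rw [hcompl, hmono.directed_le.measure_iUnion]
  exact iSup_le fun N => (escN_bound P T hT V₀ hinv hout N s).trans (min_le_right _ _)

end PRTwo

/-- soundness of Proof Rule #2 for quantitative reactivity on countable
state spaces (McIver et al.-style rule with decrease functions `dᵢ` and probability
functions `pᵢ`). -/
theorem proof_rule_two_sound
    {S : Type*} [MeasurableSpace S] [DiscreteMeasurableSpace S] [Countable S]
    (P : Kernel S S) [IsMarkovKernel P]
    (T : Kernel S (ℕ → S)) [IsMarkovKernel T] (hT : IsTrajKernel P T)
    (μ : Measure S) [IsProbabilityMeasure μ]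
    (k : ℕ) (A B : Fin k → Set S)
    (I : Set S) (V₀ : S → ℝ) (J : Fin k → Set S)
    (V W : Fin k → S → ℝ) (d prob : Fin k → ℝ → ℝ)
    (hV₀nonneg : ∀ s, 0 ≤ V₀ s)
    (hVnonneg : ∀ i s, 0 ≤ V i s) (hWnonneg : ∀ i s, 0 ≤ W i s)
    (hdpos : ∀ i, ∀ r : ℝ, 0 ≤ r → 0 < d i r)
    (hppos : ∀ i, ∀ r : ℝ, 0 ≤ r → 0 < prob i r)
    (hple : ∀ i, ∀ r : ℝ, 0 ≤ r → prob i r ≤ 1)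
    (hJ : ∀ i, J i ⊆ I \ A i)
    (ha : ∀ i, ∀ s ∉ A i,
      ∫⁻ u, ENNReal.ofReal (V i u) ∂(P s) ≤ ENNReal.ofReal (V i s))
    (hb : ∀ i, ∀ s ∈ A i, 1 ≤ V i s)
    (hc : ∀ i, ∃ γ : ℝ, 0 < γ ∧ ∀ s ∈ J i, V i s ≤ 1 - γ)
    (hd : ∀ i, ∀ s ∈ I \ (B i ∪ J i), 0 < W i s)
    (he : ∀ i, ∀ s ∈ I ∩ (B i ∪ J i), W i s = 0)
    (hf : ∀ i, ∀ s ∈ I \ (B i ∪ J i),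
      ∫⁻ u, ENNReal.ofReal (W i u) ∂(P s) ≤ ENNReal.ofReal (W i s))
    (hdrift : ∀ i, ∀ r : ℝ, 0 < r → ∀ s ∈ I \ (B i ∪ J i), W i s = r →
      ENNReal.ofReal (prob i r) ≤ P s {s' | W i s' ≤ r - d i r})
    (hpanti : ∀ i, ∀ r₁ r₂ : ℝ, 0 < r₁ → r₁ ≤ r₂ → prob i r₂ ≤ prob i r₁)
    (hdanti : ∀ i, ∀ r₁ r₂ : ℝ, 0 < r₁ → r₁ ≤ r₂ → d i r₂ ≤ d i r₁)
    (hinv : ∀ s ∈ I,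
      ∫⁻ u, ENNReal.ofReal (V₀ u) ∂(P s) ≤ ENNReal.ofReal (V₀ s))
    (hout : ∀ s ∉ I, 1 ≤ V₀ s) :
    1 - ∫⁻ s, ENNReal.ofReal (V₀ s) ∂μ ≤
      (μ.bind (fun s => (T s : Measure (ℕ → S))))
        (⋂ i, finVisits (A i) ∪ infVisits (B i)) := by
  classical
  set ν : Measure (ℕ → S) := μ.bind (fun s => (T s : Measure (ℕ → S))) with hνdef
  have hbind : ∀ {Z : Set (ℕ → S)}, MeasurableSet Z → ν Z = ∫⁻ s, T s Z ∂μ := by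
    intro Z hZ
    rw [hνdef, Measure.bind_apply hZ T.measurable.aemeasurable]
  set G : Set (ℕ → S) := ⋂ i, finVisits (A i) ∪ infVisits (B i) with hGdef
  set Esc : Set (ℕ → S) := (invEvent I)ᶜ with hEscdef
  set E : Fin k → Set (ℕ → S) :=
    fun i => invEvent I ∩ infVisits (A i) ∩ (infVisits (B i))ᶜ with hEdef
  have hEmeas : ∀ i, MeasurableSet (E i) := fun i =>
    ((PRTwo.measurable_invEvent I).inter (PRTwo.measurable_infVisits (A i))).inter
      (PRTwo.measurable_infVisits (B i)).compl
  have hEscmeas : MeasurableSet Esc := (PRTwo.measurable_invEvent I).compl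
  -- each E i has ν-measure zero
  have hEzero : ∀ i, ν (E i) = 0 := by
    intro i
    obtain ⟨γ, hγ, hcV⟩ := hc i
    have hTzero : ∀ s, T s (E i) = 0 :=
      PRTwo.partII P T hT (V i) (W i) (d i) (prob i) γ hγ (hVnonneg i) (hWnonneg i)
        (hdpos i) (hppos i) (hple i) (hJ i) (ha i) (hb i) hcV (hd i) (hf i) (hdrift i)
        (hpanti i) (hdanti i)
    rw [hbind (hEmeas i)]
    simp [hTzero]
  -- the escape event is bounded by μV₀
  have hEscbound : ν Esc ≤ ∫⁻ s, ENNReal.ofReal (V₀ s) ∂μ := by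
    rw [hbind hEscmeas]
    exact lintegral_mono fun s => PRTwo.esc_bound P T hT V₀ hinv hout s
  -- complement inclusion
  have hsub : Gᶜ ⊆ Esc ∪ ⋃ i, E i := by
    intro ω hω
    rw [hGdef, compl_iInter] at hω
    obtain ⟨i, hi⟩ := mem_iUnion.mp hω
    rw [compl_union] at hi
    obtain ⟨hfin, hinf⟩ := hi
    by_cases hI : ω ∈ invEvent I
    · exact Or.inr (mem_iUnion.mpr ⟨i, ⟨hI, PRTwo.not_finVisits hfin⟩, hinf⟩)
    · exact Or.inl hI
  have hGc : ν Gᶜ ≤ ∫⁻ s, ENNReal.ofReal (V₀ s) ∂μ := by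
    calc ν Gᶜ ≤ ν (Esc ∪ ⋃ i, E i) := measure_mono hsub
      _ ≤ ν Esc + ν (⋃ i, E i) := measure_union_le _ _
      _ ≤ ∫⁻ s, ENNReal.ofReal (V₀ s) ∂μ + ∑' i, ν (E i) :=
          add_le_add hEscbound (measure_iUnion_le _)
      _ = ∫⁻ s, ENNReal.ofReal (V₀ s) ∂μ := by
          simp only [hEzero, tsum_zero, add_zero]
  -- conclude
  have hν1 : ν univ = 1 := by
    rw [hbind MeasurableSet.univ]
    simp
  have h1 : (1 : ℝ≥0∞) ≤ ν G + ν Gᶜ := by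
    calc (1 : ℝ≥0∞) = ν univ := hν1.symm
      _ = ν (G ∪ Gᶜ) := by rw [union_compl_self]
      _ ≤ ν G + ν Gᶜ := measure_union_le _ _
  rw [tsub_le_iff_right]
  calc (1 : ℝ≥0∞) ≤ ν G + ν Gᶜ := h1
    _ ≤ ν G + ∫⁻ s, ENNReal.ofReal (V₀ s) ∂μ := add_le_add_right hGc _
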